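/- arXiv:1710.04640 — 7 statements merged into one kernel-verified Lean document; each statement's English description precedes it below -/
import Mathlib

section
/- No Aztec rectangle AR(a,b) admits a tiling by right-oriented 180-trominoes. Concretely: consider the diagonal of cells on the southwestern boundary of AR(a,b). If every cell of the region is covered by trominoes from the set {{(x,y),(x,y+1),(x+1,y+1)}, {(x,y),(x+1,y),(x+1,y+1)} : x,y ∈ ℤ}, then covering all southwestern boundary cells forces two tiles to overlap or a cell adjacent to the boundary to be left uncoverable. -/
/-- An L-tromino: a 2×2 square of cells minus one corner (any rotation). -/
def IsLTromino (t : Set (ℤ × ℤ)) : Prop :=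
  ∃ x y : ℤ, ∃ c ∈ ({(x, y), (x+1, y), (x, y+1), (x+1, y+1)} : Set (ℤ × ℤ)),
    t = ({(x, y), (x+1, y), (x, y+1), (x+1, y+1)} : Set (ℤ × ℤ)) \ {c}

/-- A right-oriented 180-tromino. -/
def Is180Tromino (t : Set (ℤ × ℤ)) : Prop :=
  ∃ x y : ℤ, t = ({(x, y), (x, y+1), (x+1, y+1)} : Set (ℤ × ℤ)) ∨
             t = ({(x, y), (x+1, y), (x+1, y+1)} : Set (ℤ × ℤ))

/-- An I-tromino. -/
def IsITromino (t : Set (ℤ × ℤ)) : Prop :=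
  ∃ x y : ℤ, t = ({(x, y), (x+1, y), (x+2, y)} : Set (ℤ × ℤ)) ∨
             t = ({(x, y), (x, y+1), (x, y+2)} : Set (ℤ × ℤ))

/-- `T` is a tiling of the region `R` by tiles satisfying `P`. -/
def IsTilingBy (P : Set (ℤ × ℤ) → Prop) (T : Set (Set (ℤ × ℤ))) (R : Set (ℤ × ℤ)) : Prop :=
  (∀ t ∈ T, P t) ∧ T.PairwiseDisjoint id ∧ ⋃₀ T = R

/-- The Aztec rectangle AR(a,b): `a` cells on the southwestern side,
`b` cells on the northwestern side. -/
def aztecRect (a b : ℕ) : Set (ℤ × ℤ) :=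
  {p | (0 ≤ p.2 ∧ p.2 < (a : ℤ) ∧ (a : ℤ) - 1 - p.2 ≤ p.1 ∧ p.1 ≤ (a : ℤ) + p.2) ∨
       ((a : ℤ) ≤ p.2 ∧ p.2 < (b : ℤ) ∧ p.2 - a ≤ p.1 ∧ p.1 ≤ p.2 + a) ∨
       ((b : ℤ) ≤ p.2 ∧ p.2 < (a : ℤ) + b ∧ p.2 - a ≤ p.1 ∧ p.1 ≤ (a : ℤ) + 2*b - 1 - p.2)}

/-- The Aztec diamond AD(n): cells whose unit square lies in {|x|+|y| ≤ n+1}. -/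
def aztecDiamond (n : ℕ) : Set (ℤ × ℤ) :=
  {p | max |p.1| |p.1 + 1| + max |p.2| |p.2 + 1| ≤ (n : ℤ) + 1}

/-- The region graph of a region `R`: vertices are cells of `R`, edges between
cells at L¹-distance 1 and between `(a,b)` and `(a+1,b+1)`. -/
def regionGraph (R : Set (ℤ × ℤ)) : SimpleGraph (ℤ × ℤ) :=
  SimpleGraph.fromRel (fun p q => p ∈ R ∧ q ∈ R ∧
    (|p.1 - q.1| + |p.2 - q.2| = 1 ∨ (q.1 = p.1 + 1 ∧ q.2 = p.2 + 1)))

/-- A triangle in a graph: a 3-element set of pairwise adjacent vertices. -/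
def IsTriangle {V : Type*} (G : SimpleGraph V) (t : Finset V) : Prop :=
  t.card = 3 ∧ ∀ u ∈ t, ∀ v ∈ t, u ≠ v → G.Adj u v

/-- The intersection graph `I_R`: vertices are the triangles of the region graph of `R`,
two triangles adjacent iff they share a vertex. -/
def intersectionGraph (R : Set (ℤ × ℤ)) :
    SimpleGraph {t : Finset (ℤ × ℤ) // IsTriangle (regionGraph R) t} :=
  SimpleGraph.fromRel (fun t s => ((t : Finset (ℤ × ℤ)) ∩ (s : Finset (ℤ × ℤ))).Nonempty)

/-- Independent set in a graph. -/
def IsIndepSet {V : Type*} (G : SimpleGraph V) (S : Set V) : Prop :=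
  S.Pairwise (fun u v => ¬ G.Adj u v)


/-!
Sort the cells by the antidiagonal `x + y` they lie on. A right-oriented 180-tromino meets
three consecutive antidiagonals in one cell each. No cell of `AR(a,b)` lies below the
antidiagonal `x + y = a - 1` of its southwestern side, so every tile through a cell of the
antidiagonal `x + y = a` also contains a cell of `x + y = a + 1`. Since tiles are disjoint, this
injects the `a + 1` cells of `AR(a,b)` on `x + y = a` into the `a` cells on `x + y = a + 1`.
-/

open Finset

def diagSum (p : ℤ × ℤ) : ℤ := p.1 + p.2

def diagCells (R : Set (ℤ × ℤ)) (s : ℤ) : Set (ℤ × ℤ) := {p ∈ R | diagSum p = s}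

lemma Is180Tromino.exists_bijOn_diagSum {t : Set (ℤ × ℤ)} (ht : Is180Tromino t) :
    ∃ s, Set.BijOn diagSum t (Set.Icc s (s + 2)) := by
  obtain ⟨x, y, rfl | rfl⟩ := ht <;> refine ⟨x + y, ?_, ?_, ?_⟩ <;>
    simp [Set.MapsTo, Set.InjOn, Set.SurjOn, Set.subset_def, diagSum] <;> omega

section Tiling

variable {R : Set (ℤ × ℤ)} {T : Set (Set (ℤ × ℤ))} {s : ℤ}

lemma exists_tile_mem_diagCells_succ (hT : IsTilingBy Is180Tromino T R)
    (hR : ∀ p ∈ R, s - 1 ≤ diagSum p) {p : ℤ × ℤ} (hp : p ∈ diagCells R s) :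
    ∃ t ∈ T, p ∈ t ∧ ∃ q ∈ t, diagSum q = s + 1 := by
  obtain ⟨hP, -, hcover⟩ := hT
  obtain ⟨t, ht, hpt⟩ : p ∈ ⋃₀ T := hcover ▸ hp.1
  obtain ⟨r, hmaps, -, hsurj⟩ := (hP t ht).exists_bijOn_diagSum
  obtain ⟨c, hct, hc⟩ := hsurj (Set.left_mem_Icc.2 (by omega) : r ∈ Set.Icc r (r + 2))
  have hcR : c ∈ R := hcover ▸ Set.mem_sUnion_of_mem hct ht
  have hrp : r ≤ s := hp.2 ▸ (hmaps hpt).1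
  have hrs : s - 1 ≤ r := hc ▸ hR c hcR
  obtain ⟨q, hqt, hq⟩ := hsurj (⟨by omega, by omega⟩ : s + 1 ∈ Set.Icc r (r + 2))
  exact ⟨t, ht, hpt, q, hqt, hq⟩

theorem encard_diagCells_le_succ (hT : IsTilingBy Is180Tromino T R)
    (hR : ∀ p ∈ R, s - 1 ≤ diagSum p) :
    (diagCells R s).encard ≤ (diagCells R (s + 1)).encard := by
  choose! tile htile hpt next hnext hdiag using
    fun p (hp : p ∈ diagCells R s) => exists_tile_mem_diagCells_succ hT hR hp
  refine Set.encard_le_encard_of_injOn (f := next) (fun p hp => ⟨?_, hdiag p hp⟩) ?_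
  · exact hT.2.2 ▸ Set.mem_sUnion_of_mem (hnext p hp) (htile p hp)
  intro p hp p' hp' hpp'
  have hsame : tile p = tile p' :=
    hT.2.1.elim_set (htile p hp) (htile p' hp') (next p) (hnext p hp) (hpp' ▸ hnext p' hp')
  obtain ⟨r, -, hinj, -⟩ := (hT.1 _ (htile p hp)).exists_bijOn_diagSum
  exact hinj (hpt p hp) (hsame ▸ hpt p' hp') (hp.2.trans hp'.2.symm)

end Tiling

section AztecRect

variable {a b : ℕ}

lemma sub_one_le_diagSum_of_mem_aztecRect (hab : a ≤ b) {p : ℤ × ℤ} (hp : p ∈ aztecRect a b) :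
    (a : ℤ) - 1 ≤ diagSum p := by
  simp only [aztecRect, Set.mem_ofPred_eq] at hp
  simp only [diagSum]
  omega

lemma encard_diagCells_aztecRect_self (ha : 0 < a) (hab : a ≤ b) :
    (diagCells (aztecRect a b) a).encard = a + 1 := by
  have hcells : diagCells (aztecRect a b) a =
      (fun k : ℕ => ((a : ℤ) - k, (k : ℤ))) '' ↑(range (a + 1)) := by
    ext ⟨x, y⟩
    simp only [diagCells, diagSum, aztecRect, Set.mem_ofPred_eq, Set.mem_image, mem_coe,
      mem_range, Prod.mk.injEq]
    constructor
    · rintro ⟨h, hs⟩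
      exact ⟨y.toNat, by omega, by omega, by omega⟩
    · rintro ⟨k, hk, rfl, rfl⟩
      omega
  rw [hcells, Function.Injective.encard_image (fun k l h => by simpa using h),
    Set.encard_coe_eq_coe_finsetCard, card_range, Nat.cast_succ]

lemma encard_diagCells_aztecRect_succ (hab : a ≤ b) :
    (diagCells (aztecRect a b) (a + 1)).encard = a := by
  have hcells : diagCells (aztecRect a b) (a + 1) =
      (fun k : ℕ => ((a : ℤ) - k, (k : ℤ) + 1)) '' ↑(range a) := by
    ext ⟨x, y⟩
    simp only [diagCells, diagSum, aztecRect, Set.mem_ofPred_eq, Set.mem_image, mem_coe,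
      mem_range, Prod.mk.injEq]
    constructor
    · rintro ⟨h, hs⟩
      exact ⟨(y - 1).toNat, by omega, by omega, by omega⟩
    · rintro ⟨k, hk, rfl, rfl⟩
      omega
  rw [hcells, Function.Injective.encard_image (fun k l h => by simpa using h),
    Set.encard_coe_eq_coe_finsetCard, card_range]

end AztecRect

theorem aztecRect_no_180_cover (a b : ℕ) (ha : 0 < a) (hab : a ≤ b) :
    ¬ ∃ T : Set (Set (ℤ × ℤ)), IsTilingBy Is180Tromino T (aztecRect a b) := by
  rintro ⟨T, hT⟩
  have h := encard_diagCells_le_succ hT fun p => sub_one_le_diagSum_of_mem_aztecRect hab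
  rw [encard_diagCells_aztecRect_self ha hab, encard_diagCells_aztecRect_succ hab] at h
  norm_cast at h
  omega
end

section
/- The Aztec diamond AD(n) admits no tiling by right-oriented 180-trominoes for any n ≥ 1. -/
/-! Each right-oriented 180-tromino has exactly one cell on each of three consecutive
antidiagonals `a + b = k, k + 1, k + 2`. In `AD(n)` the lowest antidiagonal is `a + b = -n - 1`,
so a tromino through a cell with `a + b = -n` also covers a cell with `a + b = -n + 1`, and
distinct cells of the first kind get distinct partners this way. But `AD(n)` has `n + 1` cells
with `a + b = -n` and only `n` with `a + b = -n + 1`. -/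

lemma Set.ncard_le_ncard_of_pairwiseDisjoint_sUnion {α : Type*} {T : Set (Set α)} {A B : Set α}
    (hdisj : T.PairwiseDisjoint id) (hA : A ⊆ ⋃₀ T) (hB : B.Finite)
    (hsub : ∀ t ∈ T, (t ∩ A).Subsingleton) (hmeet : ∀ t ∈ T, (t ∩ A).Nonempty → (t ∩ B).Nonempty) :
    A.ncard ≤ B.ncard := by
  have htile : ∀ a ∈ A, ∃ t ∈ T, a ∈ t := fun a ha => hA ha
  choose! tile htileT hmem using htile
  choose! partner hpartner using fun a (ha : a ∈ A) => hmeet _ (htileT a ha) ⟨a, hmem a ha, ha⟩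
  refine Set.ncard_le_ncard_of_injOn partner (fun a ha => (hpartner a ha).2) ?_ hB
  intro a ha a' ha' heq
  have htile_eq : tile a = tile a' :=
    hdisj.elim (htileT a ha) (htileT a' ha')
      (Set.not_disjoint_iff.2 ⟨partner a, (hpartner a ha).1, heq ▸ (hpartner a' ha').1⟩)
  exact hsub _ (htileT a ha) ⟨hmem a ha, ha⟩ ⟨htile_eq ▸ hmem a' ha', ha'⟩

lemma Is180Tromino.injOn_add {t : Set (ℤ × ℤ)} (ht : Is180Tromino t) :
    Set.InjOn (fun p : ℤ × ℤ => p.1 + p.2) t := by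
  obtain ⟨x, y, rfl | rfl⟩ := ht <;>
  · rintro ⟨a, b⟩ hab ⟨c, d⟩ hcd h
    simp only [Set.mem_insert_iff, Set.mem_singleton_iff, Prod.mk.injEq] at hab hcd h ⊢
    omega

lemma Is180Tromino.exists_image_add {t : Set (ℤ × ℤ)} (ht : Is180Tromino t) :
    ∃ k : ℤ, (fun p : ℤ × ℤ => p.1 + p.2) '' t = {k, k + 1, k + 2} := by
  obtain ⟨x, y, rfl | rfl⟩ := ht <;>
  · refine ⟨x + y, ?_⟩
    simp only [Set.image_insert_eq, Set.image_singleton]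
    congr 2 <;> ring_nf

lemma Is180Tromino.exists_add_eq_add_one {t : Set (ℤ × ℤ)} (ht : Is180Tromino t) {m : ℤ}
    (hge : ∀ p ∈ t, m - 1 ≤ p.1 + p.2) (hm : ∃ p ∈ t, p.1 + p.2 = m) :
    ∃ p ∈ t, p.1 + p.2 = m + 1 := by
  obtain ⟨k, hk⟩ := ht.exists_image_add
  have hk_mem : k ∈ (fun p : ℤ × ℤ => p.1 + p.2) '' t := hk ▸ Set.mem_insert k _
  obtain ⟨q, hq, hqk : q.1 + q.2 = k⟩ := hk_mem
  obtain ⟨p, hp, hpm⟩ := hm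
  have hm_mem : m ∈ ({k, k + 1, k + 2} : Set ℤ) := hk ▸ ⟨p, hp, hpm⟩
  have hm_succ : m + 1 ∈ ({k, k + 1, k + 2} : Set ℤ) := by
    have := hge q hq
    simp only [Set.mem_insert_iff, Set.mem_singleton_iff] at hm_mem ⊢
    omega
  rw [← hk] at hm_succ
  exact hm_succ

lemma neg_sub_one_le_add_of_mem_aztecDiamond {n : ℕ} {p : ℤ × ℤ} (hp : p ∈ aztecDiamond n) :
    -(n : ℤ) - 1 ≤ p.1 + p.2 := by
  simp only [aztecDiamond, Set.mem_ofPred_eq, abs_eq_max_neg] at hp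
  omega

lemma aztecDiamond_sep_add_eq_neg {n : ℕ} (hn : 1 ≤ n) :
    {p ∈ aztecDiamond n | p.1 + p.2 = -n} = (fun a : ℤ => (a, -n - a)) '' Set.Icc (-n) 0 := by
  ext ⟨a, b⟩
  simp only [aztecDiamond, Set.mem_ofPred_eq, Set.mem_image, Set.mem_Icc, Prod.mk.injEq,
    abs_eq_max_neg]
  constructor
  · rintro ⟨h, hab⟩
    exact ⟨a, by omega, rfl, by omega⟩
  · rintro ⟨a, ha, rfl, rfl⟩
    omega

lemma aztecDiamond_sep_add_eq_neg_add_one (n : ℕ) :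
    {p ∈ aztecDiamond n | p.1 + p.2 = -n + 1} =
      (fun a : ℤ => (a, -n + 1 - a)) '' Set.Icc (-n + 1) 0 := by
  ext ⟨a, b⟩
  simp only [aztecDiamond, Set.mem_ofPred_eq, Set.mem_image, Set.mem_Icc, Prod.mk.injEq,
    abs_eq_max_neg]
  constructor
  · rintro ⟨h, hab⟩
    exact ⟨a, by omega, rfl, by omega⟩
  · rintro ⟨a, ha, rfl, rfl⟩
    omega

lemma ncard_image_Icc_antidiagonal (c lo hi : ℤ) :
    ((fun a : ℤ => (a, c - a)) '' Set.Icc lo hi).ncard = (hi + 1 - lo).toNat := by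
  rw [Set.ncard_image_of_injective _ fun a b h => (Prod.mk.inj h).1, ← Finset.coe_Icc,
    Set.ncard_coe_finset, Int.card_Icc]

theorem aztecDiamond_no_180_cover (n : ℕ) (hn : 1 ≤ n) :
    ¬ ∃ T : Set (Set (ℤ × ℤ)), IsTilingBy Is180Tromino T (aztecDiamond n) := by
  rintro ⟨T, hP, hdisj, hcover⟩
  have hsub : ∀ t ∈ T, t ⊆ aztecDiamond n := fun t ht => hcover ▸ Set.subset_sUnion_of_mem ht
  have hmeet : ∀ t ∈ T, (t ∩ {p ∈ aztecDiamond n | p.1 + p.2 = -n}).Nonempty →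
      (t ∩ {p ∈ aztecDiamond n | p.1 + p.2 = -n + 1}).Nonempty := by
    rintro t ht ⟨p, hpt, -, hp⟩
    obtain ⟨q, hqt, hq⟩ := (hP t ht).exists_add_eq_add_one
      (fun q hq => by simpa using neg_sub_one_le_add_of_mem_aztecDiamond (hsub t ht hq))
      ⟨p, hpt, hp⟩
    exact ⟨q, hqt, hsub t ht hqt, hq⟩
  have hle := Set.ncard_le_ncard_of_pairwiseDisjoint_sUnion hdisj (hcover ▸ Set.sep_subset _ _)
    (aztecDiamond_sep_add_eq_neg_add_one n ▸ (Set.finite_Icc _ _).image _)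
    (fun t ht x hx y hy => (hP t ht).injOn_add hx.1 hy.1 (hx.2.2.trans hy.2.2.symm)) hmeet
  rw [aztecDiamond_sep_add_eq_neg hn, aztecDiamond_sep_add_eq_neg_add_one,
    ncard_image_Icc_antidiagonal, ncard_image_Icc_antidiagonal] at hle
  omega
end

section
/- A finite region R admits a 180-cover (a partition into right-oriented 180-trominoes) if and only if the intersection graph I_R has an independent set of size |R|/3. -/
/-!
A triangle of the region graph is exactly a 180-tromino inside `R`: if `a, b, c` are pairwise
adjacent, then `b - a`, `c - a` and their difference all lie in `{±(1,0), ±(0,1), ±(1,1)}`,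
and a finite check shows that `{0, b - a, c - a}` is then a translate of one of the two tromino
shapes. So a 180-cover of `R` is the same thing as a family of pairwise disjoint triangles, i.e.
an independent set of `I_R`, whose union is `R`. The union of such a family always lies in `R`
and has three cells per triangle, so for finite `R` it is all of `R` exactly when the family has
`|R| / 3` members.
-/

open Pointwise

def regionSteps : Finset (ℤ × ℤ) := {(1, 0), (-1, 0), (0, 1), (0, -1), (1, 1), (-1, -1)}

def trominoShapes : Finset (Finset (ℤ × ℤ)) := {{0, (0, 1), (1, 1)}, {0, (1, 0), (1, 1)}}

lemma is180Tromino_iff {t : Set (ℤ × ℤ)} :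
    Is180Tromino t ↔ ∃ w : ℤ × ℤ, ∃ P ∈ trominoShapes, t = ↑(w +ᵥ P) := by
  simp only [Is180Tromino, trominoShapes, Finset.mem_insert, Finset.mem_singleton,
    exists_eq_or_imp, exists_eq_left, Finset.vadd_finset_insert, Finset.vadd_finset_singleton,
    Finset.coe_insert, Finset.coe_singleton, Prod.exists, vadd_eq_add, Prod.mk_add_mk, add_zero]

lemma trominoShapes_isTriangle : ∀ P ∈ trominoShapes,
    P.card = 3 ∧ ∀ d ∈ P, ∀ e ∈ P, d ≠ e → e - d ∈ regionSteps := by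
  decide

-- `v` ranges over the offsets of a tromino corner from a cell of the tromino; bounding it
-- keeps the statement decidable.
lemma exists_trominoShape_of_mem_regionSteps : ∀ d ∈ regionSteps, ∀ e ∈ regionSteps,
    d ≠ e → e - d ∈ regionSteps →
    ∃ v ∈ ({0, (0, -1), (-1, 0), (-1, -1)} : Finset (ℤ × ℤ)),
      ∃ P ∈ trominoShapes, ({0, d, e} : Finset (ℤ × ℤ)) = v +ᵥ P := by
  decide

section RegionGraph

variable {R : Set (ℤ × ℤ)}

lemma regionGraph_adj_iff {p q : ℤ × ℤ} :
    (regionGraph R).Adj p q ↔ p ∈ R ∧ q ∈ R ∧ q - p ∈ regionSteps := by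
  obtain ⟨a, b⟩ := p
  obtain ⟨c, d⟩ := q
  simp only [regionGraph, SimpleGraph.fromRel_adj, regionSteps, Finset.mem_insert,
    Finset.mem_singleton, Prod.mk_sub_mk, Prod.mk.injEq, ne_eq, abs_sub_comm c a,
    abs_sub_comm d b]
  by_cases ha : (a, b) ∈ R <;> by_cases hc : (c, d) ∈ R <;>
    simp only [ha, hc, true_and, false_and, or_false, and_false]
  rcases abs_cases (a - c) with ⟨h1, _⟩ | ⟨h1, _⟩ <;>
    rcases abs_cases (b - d) with ⟨h2, _⟩ | ⟨h2, _⟩ <;> rw [h1, h2] <;> omega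

lemma isTriangle_regionGraph_iff {t : Finset (ℤ × ℤ)} :
    IsTriangle (regionGraph R) t ↔ Is180Tromino ↑t ∧ ↑t ⊆ R := by
  simp only [is180Tromino_iff, Finset.coe_inj]
  constructor
  · rintro ⟨hcard, hadj⟩
    obtain ⟨a, b, c, hab, hac, hbc, rfl⟩ := Finset.card_eq_three.mp hcard
    obtain ⟨ha, hb, hab'⟩ := regionGraph_adj_iff.mp (hadj a (by simp) b (by simp) hab)
    obtain ⟨-, hc, hac'⟩ := regionGraph_adj_iff.mp (hadj a (by simp) c (by simp) hac)
    obtain ⟨-, -, hbc'⟩ := regionGraph_adj_iff.mp (hadj b (by simp) c (by simp) hbc)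
    obtain ⟨v, -, P, hP, hshape⟩ := exists_trominoShape_of_mem_regionSteps _ hab' _ hac'
      (by simpa using hbc) (by simpa using hbc')
    refine ⟨⟨a + v, P, hP, ?_⟩, ?_⟩
    · rw [← vadd_vadd, ← hshape]
      simp [Finset.vadd_finset_insert]
    · simp [Set.insert_subset_iff, ha, hb, hc]
  · rintro ⟨⟨w, P, hP, rfl⟩, hR⟩
    obtain ⟨hcard, hsteps⟩ := trominoShapes_isTriangle P hP
    refine ⟨by rw [Finset.card_vadd_finset, hcard], ?_⟩
    simp only [Finset.mem_vadd_finset]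
    rintro _ ⟨d, hd, rfl⟩ _ ⟨e, he, rfl⟩ hde
    refine regionGraph_adj_iff.mpr ⟨hR (Finset.vadd_mem_vadd_finset hd),
      hR (Finset.vadd_mem_vadd_finset he), ?_⟩
    simpa using hsteps d hd e he (by rintro rfl; exact hde rfl)

lemma exists_isTriangle_coe_eq {t : Set (ℤ × ℤ)} (h : Is180Tromino t) (ht : t ⊆ R) :
    ∃ s : {s : Finset (ℤ × ℤ) // IsTriangle (regionGraph R) s}, (s.1 : Set _) = t := by
  obtain ⟨w, P, -, rfl⟩ := is180Tromino_iff.mp h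
  exact ⟨⟨w +ᵥ P, isTriangle_regionGraph_iff.mpr ⟨h, ht⟩⟩, rfl⟩

lemma finite_isTriangle_regionGraph (hR : R.Finite) :
    Finite {t : Finset (ℤ × ℤ) // IsTriangle (regionGraph R) t} :=
  Set.Finite.to_subtype <| hR.toFinset.powerset.finite_toSet.subset fun t ht => by
    simpa using (isTriangle_regionGraph_iff.mp ht).2

lemma isIndepSet_intersectionGraph_iff
    {S : Set {t : Finset (ℤ × ℤ) // IsTriangle (regionGraph R) t}} :
    IsIndepSet (intersectionGraph R) S ↔ S.PairwiseDisjoint (fun s => (s.1 : Set (ℤ × ℤ))) := by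
  refine forall₂_congr fun s _ => forall₂_congr fun s' _ => forall_congr' fun hne => ?_
  simp only [intersectionGraph, SimpleGraph.fromRel_adj, Function.onFun, Finset.disjoint_coe]
  rw [Finset.disjoint_iff_inter_eq_empty, Finset.inter_comm s'.1, or_self,
    ← Finset.not_nonempty_iff_eq_empty]
  exact not_congr (and_iff_right hne)

lemma ncard_biUnion_isTriangle {V : Type*} {G : SimpleGraph V}
    {S : Set {t : Finset V // IsTriangle G t}} (hS : S.Finite)
    (hd : S.PairwiseDisjoint (fun s => (s.1 : Set V))) :
    (⋃ s ∈ S, (s.1 : Set V)).ncard = 3 * S.ncard := by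
  rw [hS.ncard_biUnion (fun s _ => Finset.finite_toSet _) hd,
    finsum_mem_eq_finite_toFinset_sum _ hS, Set.ncard_eq_toFinset_card S hS, mul_comm,
    ← smul_eq_mul, ← Finset.sum_const]
  exact Finset.sum_congr rfl fun s _ => by rw [Set.ncard_coe_finset, s.2.1]

lemma isTilingBy_image_iff (hR : R.Finite)
    (S : Set {t : Finset (ℤ × ℤ) // IsTriangle (regionGraph R) t}) :
    IsTilingBy Is180Tromino ((fun s => (s.1 : Set (ℤ × ℤ))) '' S) R ↔
      IsIndepSet (intersectionGraph R) S ∧ 3 * S.ncard = R.ncard := by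
  have hinj : S.InjOn (fun s => (s.1 : Set (ℤ × ℤ))) :=
    fun s _ s' _ h => Subtype.ext (Finset.coe_injective h)
  have htromino : ∀ t ∈ (fun s => (s.1 : Set (ℤ × ℤ))) '' S, Is180Tromino t := by
    rintro _ ⟨s, -, rfl⟩
    exact (isTriangle_regionGraph_iff.mp s.2).1
  have hsub : ⋃₀ ((fun s => (s.1 : Set (ℤ × ℤ))) '' S) ⊆ R := by
    rintro p ⟨_, ⟨s, -, rfl⟩, hp⟩
    exact (isTriangle_regionGraph_iff.mp s.2).2 hp
  have : Finite {t : Finset (ℤ × ℤ) // IsTriangle (regionGraph R) t} :=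
    finite_isTriangle_regionGraph hR
  rw [IsTilingBy, hinj.pairwiseDisjoint_image, Function.id_comp,
    ← isIndepSet_intersectionGraph_iff, iff_true_intro htromino, true_and]
  refine and_congr_right fun hd => ?_
  rw [← ncard_biUnion_isTriangle S.toFinite (isIndepSet_intersectionGraph_iff.mp hd),
    ← Set.sUnion_image]
  exact ⟨congrArg Set.ncard, fun h => Set.eq_of_subset_of_ncard_le hsub h.ge hR⟩

end RegionGraph

theorem has_180_cover_iff_indepSet (R : Set (ℤ × ℤ)) (hR : R.Finite) :
    (∃ T : Set (Set (ℤ × ℤ)), IsTilingBy Is180Tromino T R) ↔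
    ∃ S : Set {t : Finset (ℤ × ℤ) // IsTriangle (regionGraph R) t},
      IsIndepSet (intersectionGraph R) S ∧ 3 * S.ncard = R.ncard := by
  constructor
  · rintro ⟨T, hT⟩
    have hrange : T ⊆ Set.range
        fun s : {t : Finset (ℤ × ℤ) // IsTriangle (regionGraph R) t} => (s.1 : Set (ℤ × ℤ)) :=
      fun t ht => exists_isTriangle_coe_eq (hT.1 t ht) (hT.2.2 ▸ Set.subset_sUnion_of_mem ht)
    rw [← Set.image_preimage_eq_of_subset hrange] at hT
    exact ⟨_, (isTilingBy_image_iff hR _).mp hT⟩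
  · rintro ⟨S, hS⟩
    exact ⟨_, (isTilingBy_image_iff hR S).mpr hS⟩
end

section
/- If G is the graph representation of a lattice region R, has a number of vertices divisible by 3, and is not detachable, then G is a tree (acyclic). -/
/-- The graph representation of a region: vertices are the cells, edges between
cells at L¹-distance 1. -/
def graphRep (R : Set (ℤ × ℤ)) : SimpleGraph R :=
  SimpleGraph.fromRel (fun p q =>
    |(p : ℤ × ℤ).1 - (q : ℤ × ℤ).1| + |(p : ℤ × ℤ).2 - (q : ℤ × ℤ).2| = 1)

/-- A connected graph is detachable if its vertex set splits into two nonempty parts,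
each inducing a connected subgraph with vertex count divisible by 3. -/
def Detachable {V : Type*} (G : SimpleGraph V) : Prop :=
  ∃ V₁ V₂ : Set V, Disjoint V₁ V₂ ∧ V₁ ∪ V₂ = Set.univ ∧
    V₁.Nonempty ∧ V₂.Nonempty ∧
    (G.induce V₁).Connected ∧ (G.induce V₂).Connected ∧
    3 ∣ V₁.ncard ∧ 3 ∣ V₂.ncard


/-!
Take a cycle of length at least four (the lattice graph is bipartite, so it has no triangles),
written as an edge `x ~ y` closing a path `x = q₀, q₁, …, qₖ = y` with `k ≥ 3`. Let `Sᵢ` be the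
component of `qᵢ` after deleting `q₀, …, qᵢ₋₁`, so that `V = S₀ ⊇ S₁ ⊇ S₂ ⊇ S₃ ∋ y`. For `i < j`
both `Sᵢ \ Sⱼ` and its complement `Sⱼ ∪ Sᵢᶜ` are connected, the latter through the edge `y ~ x`.
By pigeonhole two of `|S₀|, …, |S₃|` agree mod 3, and the corresponding `Sᵢ \ Sⱼ` detaches `G`.
-/

namespace SimpleGraph

variable {V : Type*} {G : SimpleGraph V}

lemma connected_induce_singleton (v : V) : (G.induce {v}).Connected :=
  { preconnected := .of_subsingleton, nonempty := ⟨⟨v, rfl⟩⟩ }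

/-- The vertex set of the connected component of `v` in `G - A`; empty when `v ∈ A`. -/
def componentAvoiding (G : SimpleGraph V) (A : Set V) (v : V) : Set V :=
  ⋃₀ {T | v ∈ T ∧ Disjoint T A ∧ (G.induce T).Connected}

section componentAvoiding

variable {A B T : Set V} {u v w x : V}

lemma subset_componentAvoiding (hv : v ∈ T) (hTA : Disjoint T A)
    (hT : (G.induce T).Connected) : T ⊆ G.componentAvoiding A v :=
  Set.subset_sUnion_of_mem ⟨hv, hTA, hT⟩

lemma disjoint_componentAvoiding : Disjoint (G.componentAvoiding A v) A :=
  Set.disjoint_sUnion_left.2 fun _ hT => hT.2.1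

lemma connected_induce_componentAvoiding (hv : v ∉ A) :
    (G.induce (G.componentAvoiding A v)).Connected :=
  induce_sUnion_connected_of_pairwise_not_disjoint
    ⟨{v}, rfl, Set.disjoint_singleton_left.2 hv, connected_induce_singleton v⟩
    (fun hs ht => ⟨v, hs.1, ht.1⟩) (fun hs => hs.2.2)

lemma mem_componentAvoiding_of_adj (hu : u ∈ G.componentAvoiding A v) (hx : x ∉ A)
    (hux : G.Adj u x) : x ∈ G.componentAvoiding A v := by
  obtain ⟨T, ⟨hvT, hTA, hT⟩, huT⟩ := hu
  have huA : u ∉ A := Set.disjoint_left.1 hTA huT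
  refine subset_componentAvoiding (T := T ∪ {u, x}) (Or.inl hvT) ?_
    (induce_union_connected hT.preconnected (induce_pair_connected_of_adj hux).preconnected
      ⟨u, huT, by simp⟩) (Or.inr (by simp))
  simp [Set.disjoint_insert_left, hTA, huA, hx]

lemma componentAvoiding_subset (hAB : A ⊆ B) (hw : w ∈ G.componentAvoiding A v) :
    G.componentAvoiding B w ⊆ G.componentAvoiding A v := by
  obtain ⟨T, ⟨hvT, hTA, hT⟩, hwT⟩ := hw
  rintro u ⟨T', ⟨hwT', hT'B, hT'⟩, huT'⟩
  exact subset_componentAvoiding (T := T ∪ T') (Or.inl hvT)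
    (Set.disjoint_union_left.2 ⟨hTA, hT'B.mono_right hAB⟩)
    (induce_union_connected hT.preconnected hT'.preconnected ⟨w, hwT, hwT'⟩) (Or.inr huT')

lemma componentAvoiding_empty (hG : G.Connected) : G.componentAvoiding ∅ v = Set.univ :=
  Set.eq_univ_of_univ_subset <|
    subset_componentAvoiding trivial (Set.disjoint_empty _) ((induceUnivIso G).connected_iff.2 hG)

/-- A walk inside `T` from outside `G.componentAvoiding B w` to a vertex of `B` enters `B`
before it can enter the component. -/
lemma exists_connected_diff_componentAvoiding {a b : T} (p : (G.induce T).Walk a b)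
    (hb : (b : V) ∈ B) (ha : (a : V) ∉ G.componentAvoiding B w) :
    ∃ P ⊆ T \ G.componentAvoiding B w, (a : V) ∈ P ∧ (P ∩ B).Nonempty ∧
      (G.induce P).Connected := by
  have of_mem : ∀ a : T, (a : V) ∈ B → (a : V) ∉ G.componentAvoiding B w →
      ∃ P ⊆ T \ G.componentAvoiding B w, (a : V) ∈ P ∧ (P ∩ B).Nonempty ∧
        (G.induce P).Connected := fun a haB ha =>
    ⟨{(a : V)}, Set.singleton_subset_iff.2 ⟨a.2, ha⟩, Set.mem_singleton _,
      ⟨a, Set.mem_singleton _, haB⟩, connected_induce_singleton _⟩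
  induction p with
  | nil => exact of_mem _ hb ha
  | @cons a c b hac p ih =>
    by_cases haB : (a : V) ∈ B
    · exact of_mem a haB ha
    have hc : (c : V) ∉ G.componentAvoiding B w := fun hc =>
      ha (mem_componentAvoiding_of_adj hc haB (induce_adj.1 hac).symm)
    obtain ⟨P, hPT, hcP, hPB, hP⟩ := ih hb hc
    refine ⟨P ∪ {(a : V), (c : V)}, ?_, Or.inr (by simp),
      hPB.mono (by gcongr; exact Set.subset_union_left),
      induce_union_connected hP.preconnected
        (induce_pair_connected_of_adj (induce_adj.1 hac)).preconnected ⟨c, hcP, by simp⟩⟩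
    simp [Set.insert_subset_iff, hPT, ha, hc]

lemma connected_induce_diff_componentAvoiding (hT : (G.induce T).Connected)
    (hTB : (G.induce (T ∩ B)).Connected) :
    (G.induce (T \ G.componentAvoiding B w)).Connected := by
  have hTB_sub : T ∩ B ⊆ T \ G.componentAvoiding B w := fun z hz =>
    ⟨hz.1, Set.disjoint_right.1 disjoint_componentAvoiding hz.2⟩
  obtain ⟨⟨b, hb⟩⟩ := hTB.nonempty
  refine induce_connected_of_patches b (hTB_sub hb) fun {u} hu => ?_
  obtain ⟨p⟩ := hT.preconnected ⟨u, hu.1⟩ ⟨b, hb.1⟩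
  obtain ⟨P, hPsub, huP, ⟨b', hb'P, hb'B⟩, hP⟩ :=
    exists_connected_diff_componentAvoiding p hb.2 hu.2
  exact ⟨P ∪ (T ∩ B), Set.union_subset hPsub hTB_sub, Or.inr hb, Or.inl huP,
    (induce_union_connected hP.preconnected hTB.preconnected
      ⟨b', hb'P, (hPsub hb'P).1, hb'B⟩).preconnected _ _⟩

end componentAvoiding

namespace Walk

variable {x y : V} {q : G.Walk x y} {i j t : ℕ}

lemma connected_induce_getVert_image_Icc {a b : ℕ} (hab : a ≤ b) (hb : b ≤ q.length) :
    (G.induce (q.getVert '' Set.Icc a b)).Connected := by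
  induction b, hab using Nat.le_induction with
  | base =>
    rw [Set.Icc_self, Set.image_singleton]
    exact connected_induce_singleton _
  | succ b hab ih =>
    have hIcc : Set.Icc a (b + 1) = Set.Icc a b ∪ {b, b + 1} := by
      ext n; simp only [Set.mem_Icc, Set.mem_union, Set.mem_insert_iff, Set.mem_singleton_iff]
      omega
    rw [hIcc, Set.image_union, Set.image_pair]
    exact induce_union_connected (ih (by omega)).preconnected
      (induce_pair_connected_of_adj (q.adj_getVert_succ (by omega))).preconnected
      ⟨q.getVert b, ⟨b, ⟨hab, le_rfl⟩, rfl⟩, by simp⟩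

def componentBeyond (q : G.Walk x y) (i : ℕ) : Set V :=
  G.componentAvoiding (q.getVert '' Set.Iio i) (q.getVert i)

lemma getVert_notMem_image_Iio (hq : q.IsPath) (hit : i ≤ t) (ht : t ≤ q.length) :
    q.getVert t ∉ q.getVert '' Set.Iio i := by
  rintro ⟨s, hs, hst⟩
  rw [Set.mem_Iio] at hs
  have := hq.getVert_injOn (show s ≤ q.length by omega) ht hst
  omega

lemma getVert_notMem_componentBeyond (hti : t < i) : q.getVert t ∉ q.componentBeyond i :=
  Set.disjoint_right.1 disjoint_componentAvoiding ⟨t, hti, rfl⟩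

lemma getVert_mem_componentBeyond (hq : q.IsPath) (hit : i ≤ t) (ht : t ≤ q.length) :
    q.getVert t ∈ q.componentBeyond i := by
  have hdisj : Disjoint (q.getVert '' Set.Icc i q.length) (q.getVert '' Set.Iio i) := by
    rw [Set.disjoint_left]
    rintro _ ⟨s, hs, rfl⟩
    exact getVert_notMem_image_Iio hq hs.1 hs.2
  exact subset_componentAvoiding
    (Set.mem_image_of_mem _ (Set.left_mem_Icc.2 (hit.trans ht))) hdisj
    (connected_induce_getVert_image_Icc (hit.trans ht) le_rfl)
    (Set.mem_image_of_mem _ (Set.mem_Icc.2 ⟨hit, ht⟩))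

lemma connected_induce_componentBeyond (hq : q.IsPath) (hi : i ≤ q.length) :
    (G.induce (q.componentBeyond i)).Connected :=
  connected_induce_componentAvoiding (getVert_notMem_image_Iio hq le_rfl hi)

lemma componentBeyond_zero (hG : G.Connected) : q.componentBeyond 0 = Set.univ := by
  simpa [componentBeyond] using componentAvoiding_empty hG

lemma componentBeyond_anti (hq : q.IsPath) (hij : i ≤ j) (hj : j ≤ q.length) :
    q.componentBeyond j ⊆ q.componentBeyond i :=
  componentAvoiding_subset (Set.image_mono (Set.Iio_subset_Iio hij))
    (getVert_mem_componentBeyond hq hij hj)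

lemma componentBeyond_inter_image_Iio (hq : q.IsPath) (hij : i < j) (hj : j ≤ q.length) :
    q.componentBeyond i ∩ q.getVert '' Set.Iio j = q.getVert '' Set.Icc i (j - 1) := by
  ext v
  constructor
  · rintro ⟨hv, t, htj, rfl⟩
    have hit : i ≤ t := by
      by_contra! hti
      exact getVert_notMem_componentBeyond hti hv
    exact ⟨t, ⟨hit, by simp only [Set.mem_Iio] at htj; omega⟩, rfl⟩
  · rintro ⟨t, ⟨hit, htj⟩, rfl⟩
    exact ⟨getVert_mem_componentBeyond hq hit (by omega), t, by simp only [Set.mem_Iio]; omega, rfl⟩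

lemma connected_induce_componentBeyond_diff (hq : q.IsPath) (hij : i < j) (hj : j ≤ q.length) :
    (G.induce (q.componentBeyond i \ q.componentBeyond j)).Connected :=
  connected_induce_diff_componentAvoiding (connected_induce_componentBeyond hq (by omega))
    (componentBeyond_inter_image_Iio hq hij hj ▸
      connected_induce_getVert_image_Icc (by omega) (by omega))

end Walk

end SimpleGraph

open SimpleGraph

section Detachable

variable {V : Type*} {G : SimpleGraph V}

lemma detachable_of_connected_compl [Finite V] {s : Set V} (hs : s.Nonempty) (hsc : sᶜ.Nonempty)
    (hs_conn : (G.induce s).Connected) (hsc_conn : (G.induce sᶜ).Connected)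
    (h3s : 3 ∣ s.ncard) (h3 : 3 ∣ Nat.card V) : Detachable G :=
  ⟨s, sᶜ, disjoint_compl_right, Set.union_compl_self s, hs, hsc, hs_conn, hsc_conn, h3s, by
    have := Set.ncard_add_ncard_compl s
    omega⟩

lemma detachable_of_componentBeyond_ncard_mod_eq [Finite V] {x y : V} {q : G.Walk x y}
    {i j : ℕ} (hG : G.Connected) (h3 : 3 ∣ Nat.card V) (hxy : G.Adj x y) (hq : q.IsPath)
    (hij : i < j) (hj : j ≤ q.length)
    (hmod : (q.componentBeyond i).ncard % 3 = (q.componentBeyond j).ncard % 3) :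
    Detachable G := by
  have hy : y ∈ q.componentBeyond j := by
    simpa using Walk.getVert_mem_componentBeyond hq hj le_rfl
  have hji := Walk.componentBeyond_anti hq hij.le hj
  refine detachable_of_connected_compl (s := q.componentBeyond i \ q.componentBeyond j)
    ⟨q.getVert i, Walk.getVert_mem_componentBeyond hq le_rfl (by omega),
      Walk.getVert_notMem_componentBeyond hij⟩
    ⟨y, by rw [Set.compl_sdiff]; exact Or.inl hy⟩
    (Walk.connected_induce_componentBeyond_diff hq hij hj) ?_ ?_ h3
  · rw [Set.compl_sdiff]
    rcases Nat.eq_zero_or_pos i with rfl | hi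
    · rw [Walk.componentBeyond_zero hG, Set.compl_univ, Set.union_empty]
      exact Walk.connected_induce_componentBeyond hq hj
    have hx : x ∈ (q.componentBeyond i)ᶜ := by
      simpa using Walk.getVert_notMem_componentBeyond (q := q) hi
    have hcompl := Walk.connected_induce_componentBeyond_diff hq hi (by omega)
    rw [Walk.componentBeyond_zero hG, ← Set.compl_eq_univ_sdiff] at hcompl
    exact connected_induce_union (Walk.connected_induce_componentBeyond hq hj).preconnected
      hcompl.preconnected hy hx hxy.symm
  · have := Set.ncard_le_ncard hji
    rw [Set.ncard_sdiff hji]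
    omega

lemma exists_adj_isPath_three_le_length (hG : G.CliqueFree 3) (hcyc : ¬ G.IsAcyclic) :
    ∃ x y, G.Adj x y ∧ ∃ q : G.Walk x y, q.IsPath ∧ 3 ≤ q.length := by
  classical
  simp only [IsAcyclic, not_forall, not_not] at hcyc
  obtain ⟨v, c, hc⟩ := hcyc
  cases c with
  | nil => exact absurd hc Walk.not_isCycle_nil
  | @cons _ w _ hvw p =>
    have hlen := hc.three_le_length
    rw [Walk.length_cons] at hlen
    rw [Walk.cons_isCycle_iff] at hc
    refine ⟨w, v, hvw.symm, p, hc.1, ?_⟩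
    by_contra! hlt
    have hw1 : G.Adj w (p.getVert 1) := by simpa using p.adj_getVert_succ (i := 0) (by omega)
    have h1v : G.Adj (p.getVert 1) v := by
      simpa [show 1 + 1 = p.length by omega] using p.adj_getVert_succ (i := 1) (by omega)
    exact hG {v, w, p.getVert 1} (is3Clique_triple_iff.2 ⟨hvw, h1v.symm, hw1⟩)

lemma exists_lt_le_three_mod_three_eq (f : ℕ → ℕ) :
    ∃ i j, i < j ∧ j ≤ 3 ∧ f i % 3 = f j % 3 := by
  by_contra! h
  have := h 0 1; have := h 0 2; have := h 0 3; have := h 1 2; have := h 1 3; have := h 2 3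
  omega

theorem detachable_of_not_isAcyclic [Finite V] (hG : G.Connected) (hK3 : G.CliqueFree 3)
    (h3 : 3 ∣ Nat.card V) (hcyc : ¬ G.IsAcyclic) : Detachable G := by
  obtain ⟨x, y, hxy, q, hq, hlen⟩ := exists_adj_isPath_three_le_length hK3 hcyc
  obtain ⟨i, j, hij, hj, hmod⟩ :=
    exists_lt_le_three_mod_three_eq fun i => (q.componentBeyond i).ncard
  exact detachable_of_componentBeyond_ncard_mod_eq hG h3 hxy hq hij (by omega) hmod

end Detachable

lemma Int.emod_two_ne_of_abs_add_abs_eq_one {a b c d : ℤ} (h : |a - c| + |b - d| = 1) :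
    (a + b) % 2 ≠ (c + d) % 2 := by
  rcases abs_cases (a - c) with ⟨h1, -⟩ | ⟨h1, -⟩ <;>
  rcases abs_cases (b - d) with ⟨h2, -⟩ | ⟨h2, -⟩ <;> omega

lemma graphRep_colorable_two (R : Set (ℤ × ℤ)) : (graphRep R).Colorable 2 := by
  let parity : (graphRep R).Coloring Bool :=
    Coloring.mk (fun p => decide (((p : ℤ × ℤ).1 + (p : ℤ × ℤ).2) % 2 = 0)) fun {a b} hab => by
      simp only [graphRep, fromRel_adj] at hab
      simp only [ne_eq, decide_eq_decide]
      rcases hab.2 with hab | hab <;> have := Int.emod_two_ne_of_abs_add_abs_eq_one hab <;> omega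
  simpa using parity.colorable

theorem tree_of_not_detachable (R : Set (ℤ × ℤ)) (hR : R.Finite)
    (hconn : (graphRep R).Connected) (h3 : 3 ∣ R.ncard)
    (hnd : ¬ Detachable (graphRep R)) : (graphRep R).IsAcyclic := by
  have : Finite R := hR.to_subtype
  by_contra hcyc
  exact hnd <| detachable_of_not_isAcyclic hconn
    ((graphRep_colorable_two R).cliqueFree (by norm_num)) (by rwa [Nat.card_coe_set_eq]) hcyc
end

section
/- If a region R admits a tiling by I-trominoes, then the subdivided region R⊞ admits a tiling by 180-trominoes: every translate of a horizontal I-tromino {(0,0),(1,0),(2,0)} or vertical I-tromino {(0,0),(0,1),(0,2)}, after subdividing each cell into four, yields a 2×6 or 6×2 rectangle, and every 2×6 (and 6×2) rectangle can be partitioned into four right-oriented 180-trominoes. -/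
/-- The region obtained by subdividing each cell of `R` into four cells. -/
def subdivide (R : Set (ℤ × ℤ)) : Set (ℤ × ℤ) :=
  ⋃ q ∈ R, ({(2*q.1, 2*q.2), (2*q.1 + 1, 2*q.2),
             (2*q.1, 2*q.2 + 1), (2*q.1 + 1, 2*q.2 + 1)} : Set (ℤ × ℤ))

open Set

def IsTileable (P : Set (ℤ × ℤ) → Prop) (R : Set (ℤ × ℤ)) : Prop :=
  ∃ T, IsTilingBy P T R

namespace IsTileable

variable {P : Set (ℤ × ℤ) → Prop}

theorem of_tile {t : Set (ℤ × ℤ)} (ht : P t) : IsTileable P t :=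
  ⟨{t}, by simpa using ht, pairwiseDisjoint_singleton _ _, sUnion_singleton t⟩

theorem union {A B : Set (ℤ × ℤ)} (hA : IsTileable P A) (hB : IsTileable P B)
    (hAB : Disjoint A B) : IsTileable P (A ∪ B) := by
  obtain ⟨S, hSP, hSdisj, rfl⟩ := hA
  obtain ⟨S', hS'P, hS'disj, rfl⟩ := hB
  refine ⟨S ∪ S', ?_, ?_, sUnion_union S S'⟩
  · rintro t (ht | ht)
    exacts [hSP t ht, hS'P t ht]
  · refine pairwiseDisjoint_union.2 ⟨hSdisj, hS'disj, fun s hs s' hs' _ => ?_⟩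
    exact hAB.mono (subset_sUnion_of_mem hs) (subset_sUnion_of_mem hs')

theorem biUnion {ι : Type*} {I : Set ι} {f : ι → Set (ℤ × ℤ)} (hdisj : I.PairwiseDisjoint f)
    (h : ∀ i ∈ I, IsTileable P (f i)) : IsTileable P (⋃ i ∈ I, f i) := by
  choose! S hS using h
  have hcover : ∀ i ∈ I, ⋃₀ S i = f i := fun i hi => (hS i hi).2.2
  refine ⟨⋃ i ∈ I, S i, ?_, ?_, ?_⟩
  · simp only [mem_iUnion]
    rintro t ⟨i, hi, ht⟩
    exact (hS i hi).1 t ht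
  · refine PairwiseDisjoint.biUnion ?_ fun i hi => (hS i hi).2.1
    have hunion : ∀ i ∈ I, ⨆ t ∈ S i, id t = f i := fun i hi => by
      rw [← hcover i hi, sUnion_eq_biUnion]
      rfl
    intro i hi j hj hij
    simpa only [Function.onFun, hunion i hi, hunion j hj] using hdisj hi hj hij
  · simp only [sUnion_iUnion]
    exact iUnion₂_congr hcover

end IsTileable

theorem subdivide_eq_preimage (R : Set (ℤ × ℤ)) :
    subdivide R = Prod.map (· / 2) (· / 2) ⁻¹' R := by
  ext ⟨a, b⟩
  simp only [subdivide, mem_iUnion, mem_insert_iff, mem_singleton_iff, Prod.mk.injEq,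
    mem_preimage, Prod.map_apply, exists_prop]
  constructor
  · rintro ⟨⟨c, d⟩, hcd, hab⟩
    convert hcd using 1
    exact Prod.ext (by omega) (by omega)
  · exact fun h => ⟨_, h, by omega⟩

theorem isTileable_Ico_three_two (x y : ℤ) :
    IsTileable Is180Tromino (Ico x (x + 3) ×ˢ Ico y (y + 2)) := by
  have h : Ico x (x + 3) ×ˢ Ico y (y + 2) =
      {(x, y), (x, y + 1), (x + 1, y + 1)} ∪ {(x + 1, y), (x + 1 + 1, y), (x + 1 + 1, y + 1)} := by
    ext ⟨a, b⟩
    simp only [mem_prod, mem_Ico, mem_union, mem_insert_iff, mem_singleton_iff, Prod.mk.injEq]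
    omega
  rw [h]
  refine (IsTileable.of_tile (P := Is180Tromino) ⟨x, y, .inl rfl⟩).union
    (.of_tile ⟨x + 1, y, .inr rfl⟩) ?_
  rw [disjoint_left]
  rintro ⟨a, b⟩ h₁ h₂
  simp only [mem_insert_iff, mem_singleton_iff, Prod.mk.injEq] at h₁ h₂
  omega

theorem isTileable_Ico_two_three (x y : ℤ) :
    IsTileable Is180Tromino (Ico x (x + 2) ×ˢ Ico y (y + 3)) := by
  have h : Ico x (x + 2) ×ˢ Ico y (y + 3) =
      {(x, y), (x + 1, y), (x + 1, y + 1)} ∪ {(x, y + 1), (x, y + 1 + 1), (x + 1, y + 1 + 1)} := by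
    ext ⟨a, b⟩
    simp only [mem_prod, mem_Ico, mem_union, mem_insert_iff, mem_singleton_iff, Prod.mk.injEq]
    omega
  rw [h]
  refine (IsTileable.of_tile (P := Is180Tromino) ⟨x, y, .inr rfl⟩).union
    (.of_tile ⟨x, y + 1, .inl rfl⟩) ?_
  rw [disjoint_left]
  rintro ⟨a, b⟩ h₁ h₂
  simp only [mem_insert_iff, mem_singleton_iff, Prod.mk.injEq] at h₁ h₂
  omega

theorem IsITromino.isTileable_subdivide {t : Set (ℤ × ℤ)} (ht : IsITromino t) :
    IsTileable Is180Tromino (subdivide t) := by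
  obtain ⟨x, y, rfl | rfl⟩ := ht
  · have h : subdivide {(x, y), (x + 1, y), (x + 2, y)} =
        Ico (2 * x) (2 * x + 3) ×ˢ Ico (2 * y) (2 * y + 2) ∪
          Ico (2 * x + 3) (2 * x + 3 + 3) ×ˢ Ico (2 * y) (2 * y + 2) := by
      ext ⟨a, b⟩
      simp only [subdivide_eq_preimage, mem_preimage, Prod.map_apply, mem_insert_iff,
        mem_singleton_iff, Prod.mk.injEq, mem_union, mem_prod, mem_Ico]
      omega
    rw [h]
    exact (isTileable_Ico_three_two _ _).union (isTileable_Ico_three_two _ _)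
      (disjoint_prod.2 (.inl Ico_disjoint_Ico_same))
  · have h : subdivide {(x, y), (x, y + 1), (x, y + 2)} =
        Ico (2 * x) (2 * x + 2) ×ˢ Ico (2 * y) (2 * y + 3) ∪
          Ico (2 * x) (2 * x + 2) ×ˢ Ico (2 * y + 3) (2 * y + 3 + 3) := by
      ext ⟨a, b⟩
      simp only [subdivide_eq_preimage, mem_preimage, Prod.map_apply, mem_insert_iff,
        mem_singleton_iff, Prod.mk.injEq, mem_union, mem_prod, mem_Ico]
      omega
    rw [h]
    exact (isTileable_Ico_two_three _ _).union (isTileable_Ico_two_three _ _)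
      (disjoint_prod.2 (.inr Ico_disjoint_Ico_same))

theorem subdivide_180_cover_of_ITromino_tiling (R : Set (ℤ × ℤ))
    (T : Set (Set (ℤ × ℤ))) (hT : IsTilingBy IsITromino T R) :
    ∃ T' : Set (Set (ℤ × ℤ)), IsTilingBy Is180Tromino T' (subdivide R) := by
  obtain ⟨hI, hdisj, rfl⟩ := hT
  rw [subdivide_eq_preimage, preimage_sUnion]
  refine IsTileable.biUnion (fun s hs t ht hst => (hdisj hs ht hst).preimage _) fun t ht => ?_
  simpa only [subdivide_eq_preimage] using (hI t ht).isTileable_subdivide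
end

section
/- For every integer k ≥ 1, the Aztec diamond AD(3k) admits an L-tromino tiling, and consequently AD(3k+2) admits an L-tromino tiling (tiling AD(n) for n ≡ 0 mod 3 extends by a border of stairs to a tiling of AD(n+2)). -/
/-!
The upper half of `AD(n)` is a pyramid whose rows, from the bottom, have `2n, 2n - 2, …, 2`
cells. Its three lowest rows are tiled by one L-tromino at each end and `2 × 3` blocks (two
L-trominoes each) in between; removing them leaves the pyramid of height `n - 3`. Descending
to height `0` or `2` (the latter is two L-trominoes), every pyramid of height `n ≢ 1 (mod 3)`
is tileable, and `AD(n)` is such a pyramid together with its mirror image.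
-/

def Tileable (P : Set (ℤ × ℤ) → Prop) (R : Set (ℤ × ℤ)) : Prop :=
  ∃ T : Set (Set (ℤ × ℤ)), IsTilingBy P T R

namespace Tileable

variable {P : Set (ℤ × ℤ) → Prop} {R R₁ R₂ : Set (ℤ × ℤ)}

theorem empty (P : Set (ℤ × ℤ) → Prop) : Tileable P ∅ :=
  ⟨∅, by simp, by simp, by simp⟩

theorem of_tile {t : Set (ℤ × ℤ)} (h : P t) : Tileable P t :=
  ⟨{t}, by simpa, Set.pairwiseDisjoint_singleton _ _, by simp⟩

theorem union (h₁ : Tileable P R₁) (h₂ : Tileable P R₂) (hd : Disjoint R₁ R₂) :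
    Tileable P (R₁ ∪ R₂) := by
  obtain ⟨T₁, hP₁, hD₁, rfl⟩ := h₁
  obtain ⟨T₂, hP₂, hD₂, rfl⟩ := h₂
  refine ⟨T₁ ∪ T₂, ?_, ?_, Set.sUnion_union T₁ T₂⟩
  · rintro t (ht | ht)
    exacts [hP₁ t ht, hP₂ t ht]
  · rintro t (ht | ht) s (hs | hs) hne
    · exact hD₁ ht hs hne
    · exact hd.mono (Set.subset_sUnion_of_mem ht) (Set.subset_sUnion_of_mem hs)
    · exact hd.symm.mono (Set.subset_sUnion_of_mem ht) (Set.subset_sUnion_of_mem hs)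
    · exact hD₂ ht hs hne

theorem image {f : ℤ × ℤ → ℤ × ℤ} (hf : Function.Injective f) (hPf : ∀ t, P t → P (f '' t))
    (h : Tileable P R) : Tileable P (f '' R) := by
  obtain ⟨T, hP, hD, rfl⟩ := h
  refine ⟨Set.image f '' T, ?_, ?_, Set.image_sUnion.symm⟩
  · rintro _ ⟨t, ht, rfl⟩
    exact hPf t (hP t ht)
  · rintro _ ⟨t, ht, rfl⟩ _ ⟨s, hs, rfl⟩ hne
    exact (Set.disjoint_image_iff hf).2 (hD ht hs fun hts => hne (hts ▸ rfl))

end Tileable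

section LTromino

variable (x y : ℤ)

theorem isLTromino_missing_topLeft : IsLTromino {(x, y), (x + 1, y), (x + 1, y + 1)} :=
  ⟨x, y, (x, y + 1), by simp, by ext ⟨a, b⟩; simp [Prod.ext_iff]; omega⟩

theorem isLTromino_missing_topRight : IsLTromino {(x, y), (x + 1, y), (x, y + 1)} :=
  ⟨x, y, (x + 1, y + 1), by simp, by ext ⟨a, b⟩; simp [Prod.ext_iff]; omega⟩

theorem isLTromino_missing_bottomLeft : IsLTromino {(x + 1, y), (x, y + 1), (x + 1, y + 1)} :=
  ⟨x, y, (x, y), by simp, by ext ⟨a, b⟩; simp [Prod.ext_iff]⟩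

theorem tileable_block : Tileable IsLTromino (Set.Ico x (x + 2) ×ˢ Set.Ico y (y + 3)) := by
  have hupper := isLTromino_missing_bottomLeft x (y + 1)
  rw [add_assoc y 1 1, one_add_one_eq_two] at hupper
  convert (Tileable.of_tile (isLTromino_missing_topRight x y)).union (Tileable.of_tile hupper)
    (by rw [Set.disjoint_left]; rintro ⟨a, b⟩ h h'; simp [Prod.ext_iff] at h h'; omega) using 1
  ext ⟨a, b⟩; simp [Prod.ext_iff]; omega

theorem tileable_strip (w : ℕ) :
    Tileable IsLTromino (Set.Ico x (x + 2 * w) ×ˢ Set.Ico y (y + 3)) := by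
  induction w with
  | zero => simpa using Tileable.empty IsLTromino
  | succ w ih =>
    convert ih.union (tileable_block (x + 2 * w) y)
      (by rw [Set.disjoint_left]; rintro ⟨a, b⟩ h h'; simp at h h'; omega) using 1
    ext ⟨a, b⟩; simp; omega

end LTromino

/-- The pyramid of height `n` on the row `y`: its row `y + r` consists of the `2 (n - r)`
cells with `r - n ≤ x < n - r`. -/
def pyramid (n : ℕ) (y : ℤ) : Set (ℤ × ℤ) :=
  {p | y ≤ p.2 ∧ p.2 < y + n ∧ p.2 - y - n ≤ p.1 ∧ p.1 < n - (p.2 - y)}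

def pyramidBase (n : ℕ) (y : ℤ) : Set (ℤ × ℤ) :=
  pyramid n y ∩ {p | p.2 < y + 3}

theorem pyramid_add_three (n : ℕ) (y : ℤ) :
    pyramid (n + 3) y = pyramidBase (n + 3) y ∪ pyramid n (y + 3) := by
  ext ⟨a, b⟩; simp [pyramidBase, pyramid]; omega

theorem disjoint_pyramidBase_pyramid (n : ℕ) (y : ℤ) :
    Disjoint (pyramidBase (n + 3) y) (pyramid n (y + 3)) := by
  rw [Set.disjoint_left]; rintro ⟨a, b⟩ h h'; simp [pyramidBase, pyramid] at h h'; omega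

theorem pyramidBase_two (y : ℤ) : pyramidBase 2 y = pyramid 2 y :=
  Set.inter_eq_left.2 fun p hp => by simp only [pyramid, Set.mem_ofPred_eq] at hp ⊢; omega

theorem tileable_pyramidBase (m : ℕ) (y : ℤ) :
    Tileable IsLTromino (pyramidBase (m + 2) y) := by
  have hleft := Tileable.of_tile (isLTromino_missing_topLeft (-(m + 2)) y)
  have hright := Tileable.of_tile (isLTromino_missing_topRight m y)
  have hmiddle := tileable_strip (-m) y m
  convert (hleft.union hmiddle ?_).union hright ?_ using 1
  · ext ⟨a, b⟩; simp [pyramidBase, pyramid, Prod.ext_iff]; omega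
  all_goals rw [Set.disjoint_left]; rintro ⟨a, b⟩ h h'; simp [Prod.ext_iff] at h h'; omega

theorem tileable_pyramid : ∀ n : ℕ, n % 3 ≠ 1 → ∀ y : ℤ, Tileable IsLTromino (pyramid n y)
  | 0, _, y => by
    convert Tileable.empty IsLTromino
    ext ⟨a, b⟩; simp [pyramid]; omega
  | 1, h, _ => absurd rfl h
  | 2, _, y => pyramidBase_two y ▸ tileable_pyramidBase 0 y
  | n + 3, h, y => by
    rw [pyramid_add_three]
    exact (tileable_pyramidBase (n + 1) y).union
      (tileable_pyramid n (by omega) (y + 3)) (disjoint_pyramidBase_pyramid n y)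

/-- Reflection in the horizontal line `y = -1/2`, which swaps the two halves of `AD(n)`. -/
def reflect (p : ℤ × ℤ) : ℤ × ℤ := (p.1, -1 - p.2)

theorem reflect_involutive : Function.Involutive reflect := by
  rintro ⟨a, b⟩; simp [reflect]

theorem image_reflect (R : Set (ℤ × ℤ)) : reflect '' R = reflect ⁻¹' R :=
  congrFun reflect_involutive.image_eq_preimage_symm R

theorem isLTromino_image_reflect {t : Set (ℤ × ℤ)} (h : IsLTromino t) :
    IsLTromino (reflect '' t) := by
  obtain ⟨x, y, c, hc, rfl⟩ := h
  have hsquare : reflect '' {(x, y), (x + 1, y), (x, y + 1), (x + 1, y + 1)} =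
      {(x, -2 - y), (x + 1, -2 - y), (x, -2 - y + 1), (x + 1, -2 - y + 1)} := by
    simp only [Set.image_insert_eq, Set.image_singleton, reflect]
    ext ⟨a, b⟩; simp [Prod.ext_iff]; omega
  refine ⟨x, -2 - y, reflect c, hsquare ▸ Set.mem_image_of_mem _ hc, ?_⟩
  rw [Set.image_sdiff reflect_involutive.injective, Set.image_singleton, hsquare]

theorem aztecDiamond_eq_pyramid_union (n : ℕ) :
    aztecDiamond n = pyramid n 0 ∪ reflect '' pyramid n 0 := by
  have max_abs (a : ℤ) : max |a| |a + 1| = if 0 ≤ a then a + 1 else -a := by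
    split_ifs <;> simp only [max_def, abs_eq_max_neg] <;> split_ifs <;> omega
  rw [image_reflect]
  ext ⟨a, b⟩
  simp only [aztecDiamond, pyramid, reflect, Set.mem_ofPred_eq, Set.mem_union, Set.mem_preimage,
    max_abs]
  split_ifs <;> omega

theorem disjoint_pyramid_image_reflect (n : ℕ) :
    Disjoint (pyramid n 0) (reflect '' pyramid n 0) := by
  rw [image_reflect, Set.disjoint_left]
  rintro ⟨a, b⟩ h h'
  simp [pyramid, reflect] at h h'; omega

theorem tileable_aztecDiamond {n : ℕ} (hn : n % 3 ≠ 1) :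
    Tileable IsLTromino (aztecDiamond n) := by
  have hpyr := tileable_pyramid n hn 0
  rw [aztecDiamond_eq_pyramid_union]
  exact hpyr.union (hpyr.image reflect_involutive.injective fun _ => isLTromino_image_reflect)
    (disjoint_pyramid_image_reflect n)

theorem aztecDiamond_tileable_general (k : ℕ) :
    (∃ T : Set (Set (ℤ × ℤ)), IsTilingBy IsLTromino T (aztecDiamond (3 * k))) ∧
    (∃ T : Set (Set (ℤ × ℤ)), IsTilingBy IsLTromino T (aztecDiamond (3 * k + 2))) :=
  ⟨tileable_aztecDiamond (by omega), tileable_aztecDiamond (by omega)⟩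

theorem aztecDiamond_tileable (k : ℕ) (hk : 1 ≤ k) :
    (∃ T : Set (Set (ℤ × ℤ)), IsTilingBy IsLTromino T (aztecDiamond (3 * k))) ∧
    (∃ T : Set (Set (ℤ × ℤ)), IsTilingBy IsLTromino T (aztecDiamond (3 * k + 2))) :=
  aztecDiamond_tileable_general k
end

section
/- The Aztec rectangle AR(2,5) admits an L-tromino tiling, and the Aztec rectangle AR(3,6) admits an L-tromino tiling. -/
/-!
Both tilings are given explicitly, each tromino recorded as a 2 × 2 block of cells together with
its missing cell. Whether such a list tiles a region is a finite check, so once the Aztec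
rectangle is cut out of a bounding box it is settled by `decide`.
-/

open Finset

theorem isTilingBy_of_list {ι : Type*} [DecidableEq ι] {P : Set (ℤ × ℤ) → Prop}
    {f : ι → Finset (ℤ × ℤ)} {L : List ι} (hP : ∀ i ∈ L, P (f i))
    (hdisj : L.Pairwise fun i j => Disjoint (f i) (f j)) :
    IsTilingBy P ((fun i => (f i : Set (ℤ × ℤ))) '' {i | i ∈ L}) (L.toFinset.biUnion f) := by
  refine ⟨?_, ?_, ?_⟩
  · rintro _ ⟨i, hi, rfl⟩
    exact hP i hi
  · rintro _ ⟨i, hi, rfl⟩ _ ⟨j, hj, rfl⟩ hne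
    have hij : i ≠ j := fun h => hne (h ▸ rfl)
    exact Finset.disjoint_coe.mpr (hdisj.forall hi hj hij)
  · ext p
    simp

def cellSquare (p : ℤ × ℤ) : Finset (ℤ × ℤ) :=
  {p, (p.1 + 1, p.2), (p.1, p.2 + 1), (p.1 + 1, p.2 + 1)}

/-- The block with lower-left cell `s.1`, minus the cell `s.2`. -/
def lTromino (s : (ℤ × ℤ) × (ℤ × ℤ)) : Finset (ℤ × ℤ) :=
  (cellSquare s.1).erase s.2

theorem isLTromino_lTromino {s : (ℤ × ℤ) × (ℤ × ℤ)} (hs : s.2 ∈ cellSquare s.1) :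
    IsLTromino (lTromino s) :=
  ⟨s.1.1, s.1.2, s.2, by simpa [cellSquare] using hs, by simp [lTromino, cellSquare]⟩

def lTrominoTiling (L : List ((ℤ × ℤ) × (ℤ × ℤ))) : Set (Set (ℤ × ℤ)) :=
  (fun s => (lTromino s : Set (ℤ × ℤ))) '' {s | s ∈ L}

theorem isTilingBy_lTrominoTiling {L : List ((ℤ × ℤ) × (ℤ × ℤ))} {R : Finset (ℤ × ℤ)}
    (hcorner : ∀ s ∈ L, s.2 ∈ cellSquare s.1)
    (hdisj : L.Pairwise fun s t => Disjoint (lTromino s) (lTromino t))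
    (hcover : L.toFinset.biUnion lTromino = R) :
    IsTilingBy IsLTromino (lTrominoTiling L) R :=
  hcover ▸ isTilingBy_of_list (fun s hs => isLTromino_lTromino (hcorner s hs)) hdisj

instance (a b : ℕ) : DecidablePred (· ∈ aztecRect a b) :=
  fun p => Set.decidableSetOf p _

theorem aztecRect_eq_filter (a b : ℕ) :
    aztecRect a b = ↑((Finset.Icc (-a : ℤ) (2 * a + 2 * b) ×ˢ Finset.Icc (0 : ℤ) (a + b)).filter
      (· ∈ aztecRect a b)) := by
  ext p
  simp only [coe_filter, mem_product, mem_Icc, Set.mem_ofPred_eq, iff_and_self]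
  simp only [aztecRect, Set.mem_ofPred_eq]
  omega

def aztecRectTwoFiveTiles : List ((ℤ × ℤ) × (ℤ × ℤ)) :=
  [((0, 0), (0, 0)), ((0, 2), (0, 3)), ((2, 0), (3, 0)), ((2, 2), (3, 2)), ((2, 4), (2, 5)),
   ((3, 2), (3, 3)), ((4, 3), (4, 3)), ((4, 5), (5, 5)), ((5, 4), (5, 4))]

def aztecRectThreeSixTiles : List ((ℤ × ℤ) × (ℤ × ℤ)) :=
  [((0, 1), (0, 1)), ((0, 3), (0, 4)), ((2, 0), (2, 1)), ((2, 1), (3, 1)), ((2, 3), (3, 3)),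
   ((2, 5), (2, 6)), ((3, 3), (3, 4)), ((4, 1), (5, 1)), ((4, 4), (4, 4)), ((4, 6), (5, 6)),
   ((5, 3), (5, 4)), ((5, 5), (5, 5)), ((5, 7), (5, 7)), ((7, 4), (8, 4)), ((7, 6), (8, 7))]

theorem isTilingBy_aztecRect_two_five :
    IsTilingBy IsLTromino (lTrominoTiling aztecRectTwoFiveTiles) (aztecRect 2 5) := by
  rw [aztecRect_eq_filter]
  exact isTilingBy_lTrominoTiling (by decide) (by decide) (by decide)

theorem isTilingBy_aztecRect_three_six :
    IsTilingBy IsLTromino (lTrominoTiling aztecRectThreeSixTiles) (aztecRect 3 6) := by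
  rw [aztecRect_eq_filter]
  exact isTilingBy_lTrominoTiling (by decide) (by decide) (by decide)

theorem aztecRect_base_cases :
    (∃ T : Set (Set (ℤ × ℤ)), IsTilingBy IsLTromino T (aztecRect 2 5)) ∧
    (∃ T : Set (Set (ℤ × ℤ)), IsTilingBy IsLTromino T (aztecRect 3 6)) :=
  ⟨⟨_, isTilingBy_aztecRect_two_five⟩, ⟨_, isTilingBy_aztecRect_three_six⟩⟩
end
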